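/- The Hopf map induces a homeomorphism from the orbit-space quotient of S³ by the circle action λ·(z₁, z₂) = (λ·z₁, λ·z₂) (with the quotient topology) onto S². -/

import Mathlib

/-!
The Hopf map is a continuous surjection from the compact space `S³` onto the Hausdorff space
`S²`, and its fibres are exactly the circle orbits: a point `(z₁, z₂)` is determined up to a unit
scalar by `‖z₁‖`, `‖z₂‖` and `z₁ * conj z₂`. A continuous bijection from the compact quotient onto
a Hausdorff space is a homeomorphism.
-/

noncomputable section

/-- The unit sphere `S³ = {(z₁,z₂) ∈ ℂ² : |z₁|² + |z₂|² = 1}`, with the subspace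
topology. -/
abbrev SphereS3 : Type :=
  {p : ℂ × ℂ // ‖p.1‖ ^ 2 + ‖p.2‖ ^ 2 = 1}

/-- The unit sphere `S² = {(w,t) ∈ ℂ × ℝ : |w|² + t² = 1}`, with the subspace topology. -/
abbrev SphereS2 : Type :=
  {q : ℂ × ℝ // ‖q.1‖ ^ 2 + q.2 ^ 2 = 1}

/-- The relation on `S³` identifying points in the same orbit of the circle action
`λ · (z₁, z₂) = (λ z₁, λ z₂)`. -/
def circleRel (z w : SphereS3) : Prop :=
  ∃ lam : ℂ, ‖lam‖ = 1 ∧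
    (w : ℂ × ℂ) = (lam * (z : ℂ × ℂ).1, lam * (z : ℂ × ℂ).2)

open ComplexConjugate Function

def Continuous.quotHomeomorph {X Y : Type*} [TopologicalSpace X] [CompactSpace X]
    [TopologicalSpace Y] [T2Space Y] {r : X → X → Prop} {f : X → Y} (hf : Continuous f)
    (hsurj : Surjective f) (hfib : ∀ x y, f x = f y ↔ r x y) : Quot r ≃ₜ Y :=
  let g : Quot r → Y := Quot.lift f fun x y hxy => (hfib x y).2 hxy
  have hinj : Injective g := by
    rintro ⟨x⟩ ⟨y⟩ hxy
    exact Quot.sound ((hfib x y).1 hxy)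
  (continuous_quot_lift _ hf).homeoOfEquivCompactToT2
    (f := Equiv.ofBijective g ⟨hinj, fun y => (hsurj y).elim fun x hx => ⟨Quot.mk r x, hx⟩⟩)

instance : CompactSpace SphereS3 := by
  refine isCompact_iff_compactSpace.1 <| (isCompact_closedBall (0 : ℂ × ℂ) 1).of_isClosed_subset
    (isClosed_eq (by fun_prop) continuous_const) fun p (hp : _ = _) => ?_
  have h₁ : ‖p.1‖ ^ 2 ≤ 1 := by nlinarith [sq_nonneg ‖p.2‖]
  have h₂ : ‖p.2‖ ^ 2 ≤ 1 := by nlinarith [sq_nonneg ‖p.1‖]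
  exact mem_closedBall_zero_iff.2 <| norm_prod_le_iff.2
    ⟨(sq_le_one_iff₀ (norm_nonneg _)).1 h₁, (sq_le_one_iff₀ (norm_nonneg _)).1 h₂⟩

lemma exists_norm_eq_one_of_mul_conj_eq {a b c d : ℂ} (ha : a ≠ 0) (hac : ‖a‖ = ‖c‖)
    (h : a * conj b = c * conj d) : ∃ u : ℂ, ‖u‖ = 1 ∧ c = u * a ∧ d = u * b := by
  have hca : c * conj c = a * conj a := by simp only [Complex.mul_conj', hac]
  have h' : conj a * b = conj c * d := by simpa using congrArg conj h
  refine ⟨c / a, by rw [norm_div, hac, div_self (hac ▸ norm_ne_zero_iff.2 ha)], by field_simp, ?_⟩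
  have hconj : conj a ≠ 0 := (map_ne_zero _).2 ha
  rw [div_mul_eq_mul_div, eq_div_iff ha]
  apply mul_left_cancel₀ hconj
  linear_combination -(d * hca) - c * h'

def hopf (p : ℂ × ℂ) : ℂ × ℝ :=
  (2 * p.1 * conj p.2, ‖p.1‖ ^ 2 - ‖p.2‖ ^ 2)

lemma continuous_hopf : Continuous hopf := by
  unfold hopf; fun_prop

lemma norm_sq_hopf_fst_add_sq (p : ℂ × ℂ) :
    ‖(hopf p).1‖ ^ 2 + (hopf p).2 ^ 2 = (‖p.1‖ ^ 2 + ‖p.2‖ ^ 2) ^ 2 := by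
  simp only [hopf, norm_mul, Complex.norm_conj, Complex.norm_ofNat]
  ring

lemma norm_sq_add_norm_sq_eq_one_of_hopf {p : ℂ × ℂ}
    (h : ‖(hopf p).1‖ ^ 2 + (hopf p).2 ^ 2 = 1) : ‖p.1‖ ^ 2 + ‖p.2‖ ^ 2 = 1 := by
  rw [norm_sq_hopf_fst_add_sq] at h
  exact (pow_eq_one_iff_of_nonneg (by positivity) two_ne_zero).1 h

lemma hopf_mul_of_norm_eq_one {u : ℂ} (hu : ‖u‖ = 1) (p : ℂ × ℂ) :
    hopf (u * p.1, u * p.2) = hopf p := by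
  have hu' : u * conj u = 1 := by rw [Complex.mul_conj', hu]; norm_num
  simp only [hopf, norm_mul, hu, one_mul, map_mul, Prod.mk.injEq, and_true]
  linear_combination 2 * p.1 * conj p.2 * hu'

lemma hopf_surjective : Surjective hopf := by
  rintro ⟨w, t⟩
  set r := √(‖w‖ ^ 2 + t ^ 2)
  have hr : r ^ 2 = ‖w‖ ^ 2 + t ^ 2 := Real.sq_sqrt (by positivity)
  have htr : |t| ≤ r := Real.abs_le_sqrt (by nlinarith [norm_nonneg w])
  -- Away from the south pole `(0, -r)`, a preimage is `(s, conj w / (2 * s))`, `s ^ 2 = (r + t) / 2`.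
  obtain hrt | hrt := (show 0 ≤ r + t by linarith [neg_abs_le t]).eq_or_lt
  · have ht : 0 ≤ -t := by linarith [abs_nonneg t]
    have hw : w = 0 := by
      rw [← norm_eq_zero, ← sq_eq_zero_iff (M₀ := ℝ)]
      nlinarith
    refine ⟨(0, √(-t)), ?_⟩
    simp [hopf, hw, Real.sq_sqrt ht]
  · set s := √((r + t) / 2)
    have hs : 0 < s := Real.sqrt_pos.2 (by linarith)
    have hs2 : s ^ 2 = (r + t) / 2 := Real.sq_sqrt (by linarith)
    refine ⟨((s : ℂ), conj w / (2 * s)), ?_⟩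
    have hs' : (s : ℂ) ≠ 0 := by exact_mod_cast hs.ne'
    simp only [hopf, map_div₀, map_mul, Complex.conj_conj, Complex.conj_ofReal, map_ofNat,
      norm_div, norm_mul, Complex.norm_conj, Complex.norm_real, Real.norm_eq_abs, abs_of_pos hs,
      Complex.norm_ofNat, Prod.mk.injEq]
    refine ⟨by field_simp, ?_⟩
    field_simp
    linear_combination (4 * s ^ 2 + 2 * r - 2 * t) * hs2 + hr

def hopfMap (z : SphereS3) : SphereS2 :=
  ⟨hopf z, by rw [norm_sq_hopf_fst_add_sq, z.2, one_pow]⟩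

lemma continuous_hopfMap : Continuous hopfMap :=
  (continuous_hopf.comp continuous_subtype_val).subtype_mk _

lemma hopfMap_surjective : Surjective hopfMap := by
  rintro ⟨q, hq⟩
  obtain ⟨p, rfl⟩ := hopf_surjective q
  exact ⟨⟨p, norm_sq_add_norm_sq_eq_one_of_hopf hq⟩, rfl⟩

lemma hopfMap_eq_iff (z w : SphereS3) : hopfMap z = hopfMap w ↔ circleRel z w := by
  obtain ⟨⟨z₁, z₂⟩, hz⟩ := z
  obtain ⟨⟨w₁, w₂⟩, hw⟩ := w
  simp only [hopfMap, hopf, Subtype.mk.injEq, Prod.mk.injEq, circleRel] at hz hw ⊢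
  constructor
  · rintro ⟨hfst, hsnd⟩
    have h₁ : ‖z₁‖ = ‖w₁‖ := (sq_eq_sq₀ (norm_nonneg _) (norm_nonneg _)).1 (by linarith)
    have h₂ : ‖z₂‖ = ‖w₂‖ := (sq_eq_sq₀ (norm_nonneg _) (norm_nonneg _)).1 (by linarith)
    by_cases hz₁ : z₁ = 0
    · have hw₁ : w₁ = 0 := norm_eq_zero.1 (by rw [← h₁, hz₁, norm_zero])
      subst hz₁ hw₁
      have hz₂ : z₂ ≠ 0 := by rintro rfl; norm_num at hz
      obtain ⟨u, hu, hw₂, -⟩ :=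
        exists_norm_eq_one_of_mul_conj_eq (b := 0) (d := 0) hz₂ h₂ (by simp)
      exact ⟨u, hu, by simp, hw₂⟩
    · obtain ⟨u, hu, hw₁, hw₂⟩ :=
        exists_norm_eq_one_of_mul_conj_eq (b := z₂) (d := w₂) hz₁ h₁
          (by linear_combination hfst / 2)
      exact ⟨u, hu, hw₁, hw₂⟩
  · rintro ⟨u, hu, rfl, rfl⟩
    simpa [hopf] using (hopf_mul_of_norm_eq_one hu (z₁, z₂)).symm

/-- The Hopf map induces a homeomorphism from the orbit-space quotient of `S³` by the
circle action (with the quotient topology) onto `S²`. -/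
theorem hopf_induces_homeomorph_quotient :
    ∃ e : Quot circleRel ≃ₜ SphereS2,
      ∀ z : SphereS3, ((e (Quot.mk circleRel z) : SphereS2) : ℂ × ℝ) =
        (2 * (z : ℂ × ℂ).1 * (starRingEnd ℂ) (z : ℂ × ℂ).2,
          ‖(z : ℂ × ℂ).1‖ ^ 2 - ‖(z : ℂ × ℂ).2‖ ^ 2) :=
  ⟨continuous_hopfMap.quotHomeomorph hopfMap_surjective hopfMap_eq_iff, fun _ => rfl⟩
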